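/- A multiversion schedule s is conflict-serializable if and only if its serialization graph SeG(s) is acyclic, where SeG(s) has the transactions as nodes and an edge from T_i to T_j whenever some operation of T_j depends on some operation of T_i in s. -/

import Mathlib

namespace MVCC

/-! Common formalization of multiversion schedules, dependencies,
conflict/view serializability, isolation levels and robustness. -/

inductive Action : Type
  | init | read | write | commit
deriving DecidableEq

/-- The ambient "environment": each operation belongs to a transaction,
has an action kind and an object; there is a special initial operation `op0`,
and each transaction has a designated commit operation and first operation. -/
structure Env (Obj Tr Opn : Type) where
  tr : Opn → Tr
  act : Opn → Action
  obj : Opn → Obj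
  op0 : Opn
  op0_act : act op0 = Action.init
  commitOf : Tr → Opn
  commit_tr : ∀ t, tr (commitOf t) = t
  commit_act : ∀ t, act (commitOf t) = Action.commit
  firstOf : Tr → Opn
  first_tr : ∀ t, tr (firstOf t) = t

variable {Obj Tr Opn : Type}

/-- Operations present in a schedule over the set of transactions `T'`. -/
def Env.opsOver (E : Env Obj Tr Opn) (T' : Set Tr) : Set Opn :=
  {a | a = E.op0 ∨ E.tr a ∈ T'}

def Env.isRead (E : Env Obj Tr Opn) (a : Opn) : Prop := E.act a = Action.read
def Env.isWrite (E : Env Obj Tr Opn) (a : Opn) : Prop := E.act a = Action.write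

/-- A transaction is read-only if it contains no write operations. -/
def Env.readOnly (E : Env Obj Tr Opn) (t : Tr) : Prop := ∀ a, E.tr a = t → ¬ E.isWrite a

/-- A multiversion schedule over the transactions `T'`:
an operation order `lt` (`<_s`), a version order `vlt` (`<<_s`)
and a version function `vf` (`v_s`). -/
structure Schedule (E : Env Obj Tr Opn) (T' : Set Tr) where
  lt : Opn → Opn → Prop
  vlt : Opn → Opn → Prop
  vf : Opn → Opn
  lt_trans : ∀ a b c, lt a b → lt b c → lt a c
  lt_irrefl : ∀ a, ¬ lt a a
  lt_total : ∀ a ∈ E.opsOver T', ∀ b ∈ E.opsOver T', a ≠ b → lt a b ∨ lt b a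
  op0_first : ∀ a ∈ E.opsOver T', a ≠ E.op0 → lt E.op0 a
  first_first : ∀ a ∈ E.opsOver T', a ≠ E.op0 → a ≠ E.firstOf (E.tr a) →
    lt (E.firstOf (E.tr a)) a
  commit_last : ∀ a ∈ E.opsOver T', a ≠ E.op0 → a ≠ E.commitOf (E.tr a) →
    lt a (E.commitOf (E.tr a))
  vlt_trans : ∀ a b c, vlt a b → vlt b c → vlt a c
  vlt_irrefl : ∀ a, ¬ vlt a a
  vlt_total : ∀ a ∈ E.opsOver T', ∀ b ∈ E.opsOver T', E.isWrite a → E.isWrite b →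
    E.obj a = E.obj b → a ≠ b → vlt a b ∨ vlt b a
  vlt_op0_first : ∀ a ∈ E.opsOver T', E.isWrite a → a ≠ E.op0 → vlt E.op0 a
  vf_read : ∀ a ∈ E.opsOver T', E.isRead a →
    vf a = E.op0 ∨ (vf a ∈ E.opsOver T' ∧ E.isWrite (vf a) ∧ E.obj (vf a) = E.obj a)
  vf_lt : ∀ a ∈ E.opsOver T', E.isRead a → lt (vf a) a

namespace Schedule

variable {E : Env Obj Tr Opn} {T' : Set Tr}

/-- ww-dependency: both writes on the same object, `b <<_s a`. -/
def wwDep (s : Schedule E T') (b a : Opn) : Prop :=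
  b ∈ E.opsOver T' ∧ a ∈ E.opsOver T' ∧ E.tr b ≠ E.tr a ∧ E.obj b = E.obj a ∧
    E.isWrite b ∧ E.isWrite a ∧ s.vlt b a

/-- wr-dependency: `b` write, `a` read, `b = v_s(a)` or `b <<_s v_s(a)`. -/
def wrDep (s : Schedule E T') (b a : Opn) : Prop :=
  b ∈ E.opsOver T' ∧ a ∈ E.opsOver T' ∧ E.tr b ≠ E.tr a ∧ E.obj b = E.obj a ∧
    E.isWrite b ∧ E.isRead a ∧ (b = s.vf a ∨ s.vlt b (s.vf a))

/-- rw-antidependency: `b` read, `a` write, `v_s(b) <<_s a`. -/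
def rwDep (s : Schedule E T') (b a : Opn) : Prop :=
  b ∈ E.opsOver T' ∧ a ∈ E.opsOver T' ∧ E.tr b ≠ E.tr a ∧ E.obj b = E.obj a ∧
    E.isRead b ∧ E.isWrite a ∧ s.vlt (s.vf b) a

/-- `a` depends on `b` in `s`. -/
def dep (s : Schedule E T') (b a : Opn) : Prop :=
  s.wwDep b a ∨ s.wrDep b a ∨ s.rwDep b a

/-- Conflict-equivalence: identical dependencies. -/
def confEquiv (s s' : Schedule E T') : Prop := ∀ b a, s.dep b a ↔ s'.dep b a

/-- `a` installs the last (`<<_s`-maximal) version of its object in `s`. -/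
def lastWrite (s : Schedule E T') (a : Opn) : Prop :=
  a ∈ E.opsOver T' ∧ E.isWrite a ∧
    ¬ ∃ c ∈ E.opsOver T', E.isWrite c ∧ E.obj c = E.obj a ∧ s.vlt a c

/-- View-equivalence: same version function on reads and the same
last installed version per object. -/
def viewEquiv (s s' : Schedule E T') : Prop :=
  (∀ a ∈ E.opsOver T', E.isRead a → s.vf a = s'.vf a) ∧
  (∀ a, s.lastWrite a ↔ s'.lastWrite a)

/-- Single-version schedule: the version order agrees with the operation order
on writes to the same object and every read reads the most recent write. -/
def singleVersion (s : Schedule E T') : Prop :=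
  (∀ a ∈ E.opsOver T', ∀ b ∈ E.opsOver T', E.isWrite a → E.isWrite b →
    E.obj a = E.obj b → (s.vlt a b ↔ s.lt a b)) ∧
  (∀ a ∈ E.opsOver T', E.isRead a →
    ¬ ∃ c ∈ E.opsOver T', E.isWrite c ∧ E.obj c = E.obj a ∧ s.lt (s.vf a) c ∧ s.lt c a)

/-- Serial schedule: transactions are not interleaved. -/
def serial (s : Schedule E T') : Prop :=
  ∀ a b c, a ∈ E.opsOver T' → b ∈ E.opsOver T' → c ∈ E.opsOver T' →
    a ≠ E.op0 → b ≠ E.op0 → c ≠ E.op0 →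
    s.lt a b → s.lt b c → E.tr a = E.tr c → E.tr b = E.tr a

def conflictSerializable (s : Schedule E T') : Prop :=
  ∃ s' : Schedule E T', s'.singleVersion ∧ s'.serial ∧ s.confEquiv s'

def viewSerializable (s : Schedule E T') : Prop :=
  ∃ s' : Schedule E T', s'.singleVersion ∧ s'.serial ∧ s.viewEquiv s'

/-- Edge of the serialization graph. -/
def sgEdge (s : Schedule E T') (ti tj : Tr) : Prop :=
  ∃ b a, s.dep b a ∧ E.tr b = ti ∧ E.tr a = tj

/-- Acyclicity of the serialization graph. -/
def sgAcyclic (s : Schedule E T') : Prop :=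
  ∀ t : Tr, ¬ Relation.TransGen s.sgEdge t t

/-- Transaction `ti` occurs (entirely) before transaction `tj` in `s`. -/
def transBefore (s : Schedule E T') (ti tj : Tr) : Prop :=
  ∀ p ∈ E.opsOver T', ∀ q ∈ E.opsOver T', p ≠ E.op0 → q ≠ E.op0 →
    E.tr p = ti → E.tr q = tj → s.lt p q

/-- Write operation `a` respects the commit order of `s`. -/
def respectsCommitOrder (s : Schedule E T') (a : Opn) : Prop :=
  ∀ b ∈ E.opsOver T', E.isWrite b → E.obj b = E.obj a → E.tr b ≠ E.tr a →
    (s.vlt a b ↔ s.lt (E.commitOf (E.tr a)) (E.commitOf (E.tr b)))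

/-- Read operation `b` is read-last-committed in `s` relative to operation `rel`. -/
def readLastCommitted (s : Schedule E T') (b rel : Opn) : Prop :=
  (s.vf b = E.op0 ∨ s.lt (E.commitOf (E.tr (s.vf b))) rel) ∧
  ¬ ∃ c ∈ E.opsOver T', E.isWrite c ∧ E.obj c = E.obj b ∧
      s.lt (E.commitOf (E.tr c)) rel ∧ s.vlt (s.vf b) c

/-- Transaction `t` exhibits a dirty write in `s`. -/
def dirtyWrite (s : Schedule E T') (t : Tr) : Prop :=
  ∃ b ∈ E.opsOver T', ∃ a ∈ E.opsOver T', E.isWrite b ∧ E.isWrite a ∧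
    E.obj b = E.obj a ∧ E.tr a = t ∧ E.tr b ≠ t ∧
    s.lt b a ∧ s.lt a (E.commitOf (E.tr b))

/-- Transaction `t` exhibits a concurrent write in `s`. -/
def concurrentWrite (s : Schedule E T') (t : Tr) : Prop :=
  ∃ b ∈ E.opsOver T', ∃ a ∈ E.opsOver T', E.isWrite b ∧ E.isWrite a ∧
    E.obj b = E.obj a ∧ E.tr a = t ∧ E.tr b ≠ t ∧
    s.lt b a ∧ s.lt (E.firstOf t) (E.commitOf (E.tr b))

/-- Two transactions are concurrent: each starts before the other commits. -/
def concurrent (s : Schedule E T') (ti tj : Tr) : Prop :=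
  s.lt (E.firstOf ti) (E.commitOf tj) ∧ s.lt (E.firstOf tj) (E.commitOf ti)

/-- Transaction `t` is allowed under Read Committed in `s`. -/
def allowedRC (s : Schedule E T') (t : Tr) : Prop :=
  (∀ a ∈ E.opsOver T', E.tr a = t → a ≠ E.op0 → E.isWrite a → s.respectsCommitOrder a) ∧
  (∀ a ∈ E.opsOver T', E.tr a = t → E.isRead a → s.readLastCommitted a a) ∧
  ¬ s.dirtyWrite t

/-- Transaction `t` is allowed under Snapshot Isolation in `s`. -/
def allowedSI (s : Schedule E T') (t : Tr) : Prop :=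
  (∀ a ∈ E.opsOver T', E.tr a = t → a ≠ E.op0 → E.isWrite a → s.respectsCommitOrder a) ∧
  (∀ a ∈ E.opsOver T', E.tr a = t → E.isRead a → s.readLastCommitted a (E.firstOf t)) ∧
  ¬ s.concurrentWrite t

/-- There is a rw-antidependency from (an operation of) `ti` to `tj`. -/
def rwEdge (s : Schedule E T') (ti tj : Tr) : Prop :=
  ∃ b a, s.rwDep b a ∧ E.tr b = ti ∧ E.tr a = tj

/-- Dangerous structure `t1 → t2 → t3`. -/
def dangerous (s : Schedule E T') (t1 t2 t3 : Tr) : Prop :=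
  s.rwEdge t1 t2 ∧ s.rwEdge t2 t3 ∧ s.concurrent t1 t2 ∧ s.concurrent t2 t3 ∧
  s.lt (E.commitOf t3) (E.commitOf t1) ∧ s.lt (E.commitOf t3) (E.commitOf t2) ∧
  (E.readOnly t1 → s.lt (E.commitOf t3) (E.firstOf t1))

end Schedule

inductive IsoLevel : Type
  | RC | SI | SSI
deriving DecidableEq

/-- A schedule is allowed under the `{RC,SI,SSI}`-allocation `f`. -/
def allowedUnder {E : Env Obj Tr Opn} {T' : Set Tr} (f : Tr → IsoLevel)
    (s : Schedule E T') : Prop :=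
  (∀ t ∈ T', f t = IsoLevel.RC → s.allowedRC t) ∧
  (∀ t ∈ T', f t ≠ IsoLevel.RC → s.allowedSI t) ∧
  ¬ ∃ t1 ∈ T', ∃ t2 ∈ T', ∃ t3 ∈ T', f t1 = IsoLevel.SSI ∧ f t2 = IsoLevel.SSI ∧
      f t3 = IsoLevel.SSI ∧ s.dangerous t1 t2 t3

/-- An (abstract) allocation: for each subset of transactions,
a set of allowed schedules over that subset. -/
def Allocation (E : Env Obj Tr Opn) : Type _ :=
  (T' : Set Tr) → Schedule E T' → Prop

/-- Conflict-robustness: every allowed schedule over every subset of `T`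
is conflict-serializable. -/
def conflictRobust (E : Env Obj Tr Opn) (T : Set Tr) (A : Allocation E) : Prop :=
  ∀ T' : Set Tr, T' ⊆ T → ∀ s : Schedule E T', A T' s → s.conflictSerializable

/-- View-robustness: every allowed schedule over every subset of `T`
is view-serializable. -/
def viewRobust (E : Env Obj Tr Opn) (T : Set Tr) (A : Allocation E) : Prop :=
  ∀ T' : Set Tr, T' ⊆ T → ∀ s : Schedule E T', A T' s → s.viewSerializable

/-- `s` is a generalized split schedule over the transactions `σ 0, …, σ (n-1)`
(cyclically ordered) with split operation `b1` of transaction `σ 0`. -/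
def isGenSplitWith {E : Env Obj Tr Opn} {T' : Set Tr} (s : Schedule E T')
    (n : ℕ) (σ : ZMod n → Tr) (b1 : Opn) : Prop :=
  2 ≤ n ∧ Function.Injective σ ∧ Set.range σ = T' ∧
  b1 ∈ E.opsOver T' ∧ b1 ≠ E.op0 ∧ E.tr b1 = σ 0 ∧
  -- shape: prefix(T1, b1) comes before all operations of T2 … Tn
  (∀ a ∈ E.opsOver T', a ≠ E.op0 → E.tr a = σ 0 → (a = b1 ∨ s.lt a b1) →
    ∀ c ∈ E.opsOver T', c ≠ E.op0 → E.tr c ≠ σ 0 → s.lt a c) ∧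
  -- shape: postfix(T1, b1) comes after all operations of T2 … Tn
  (∀ a ∈ E.opsOver T', a ≠ E.op0 → E.tr a = σ 0 → s.lt b1 a →
    ∀ c ∈ E.opsOver T', c ≠ E.op0 → E.tr c ≠ σ 0 → s.lt c a) ∧
  -- shape: T2 … Tn occur serially, in order
  (∀ i j : ZMod n, i ≠ 0 → j ≠ 0 → i.val < j.val →
    ∀ a ∈ E.opsOver T', ∀ c ∈ E.opsOver T', a ≠ E.op0 → c ≠ E.op0 →
      E.tr a = σ i → E.tr c = σ j → s.lt a c) ∧
  -- (1) there is a cyclic chain of dependencies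
  (∀ i : ZMod n, ∃ b a, s.dep b a ∧ E.tr b = σ i ∧ E.tr a = σ (i + 1)) ∧
  -- (2) the cycle is minimal: all dependencies are between consecutive pairs
  (∀ b a, s.dep b a → ∃ i : ZMod n, E.tr b = σ i ∧ E.tr a = σ (i + 1)) ∧
  -- (3) write operations respect the commit order
  (∀ a ∈ E.opsOver T', a ≠ E.op0 → E.isWrite a → s.respectsCommitOrder a)

/-- `s` is a generalized split schedule. -/
def isGenSplit {E : Env Obj Tr Opn} {T' : Set Tr} (s : Schedule E T') : Prop :=
  ∃ (n : ℕ) (σ : ZMod n → Tr) (b1 : Opn), isGenSplitWith s n σ b1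


/-! A dependency can only link conflicting operations, and in every multiversion schedule each
conflicting pair carries a dependency in exactly one direction. In a serial single-version
schedule dependencies follow the execution order, so the serialization graph embeds into the
order of the commits and is acyclic. Conversely, if the graph is acyclic, run the transactions
one after another along a linear extension of it, each read reading the last preceding write:
every dependency of `s` points forward in this serial schedule, hence is one of its
dependencies, and by the dichotomy the two schedules have the same dependencies. -/

theorem _root_.Relation.exists_isStrictTotalOrder_le_of_acyclic {α : Type*} {r : α → α → Prop}
    (h : ∀ a, ¬ Relation.TransGen r a a) :
    ∃ L : α → α → Prop, IsStrictTotalOrder α L ∧ r ≤ L := by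
  have : IsPartialOrder α (Relation.ReflTransGen r) :=
    { refl := fun _ => .refl
      trans := fun _ _ _ => .trans
      antisymm := fun a b hab hba => by
        rcases Relation.reflTransGen_iff_eq_or_transGen.1 hab with rfl | hab
        · rfl
        rcases Relation.reflTransGen_iff_eq_or_transGen.1 hba with rfl | hba
        · rfl
        exact absurd (hab.trans hba) (h a) }
  obtain ⟨le, _, hle⟩ := extend_partialOrder (Relation.ReflTransGen r)
  refine ⟨fun a b => ¬ le b a, { trichotomous := ?_, irrefl := ?_, trans := ?_ }, ?_⟩
  · exact fun a b hab hba => antisymm (not_not.1 hba) (not_not.1 hab)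
  · exact fun a h => h (refl a)
  · exact fun a b c hab hbc hca => hbc (_root_.trans hca ((total_of le a b).resolve_right hab))
  · rintro a b hab hba
    obtain rfl := antisymm (hle a b (.single hab)) hba
    exact h a (.single hab)

section

variable {E : Env Obj Tr Opn} {T' : Set Tr}

theorem Env.isWrite.ne_op0 {a : Opn} (h : E.isWrite a) : a ≠ E.op0 := by
  rintro rfl
  simp [Env.isWrite, E.op0_act] at h

theorem Env.isRead.ne_op0 {a : Opn} (h : E.isRead a) : a ≠ E.op0 := by
  rintro rfl
  simp [Env.isRead, E.op0_act] at h

theorem Env.isRead.not_isWrite {a : Opn} (h : E.isRead a) : ¬ E.isWrite a := by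
  simp_all [Env.isRead, Env.isWrite]

theorem Env.commitOf_ne_op0 (E : Env Obj Tr Opn) (t : Tr) : E.commitOf t ≠ E.op0 := by
  intro h
  simpa [h, E.op0_act] using E.commit_act t

theorem Env.commitOf_tr_mem_opsOver {a : Opn} (ha : a ∈ E.opsOver T') (ha0 : a ≠ E.op0) :
    E.commitOf (E.tr a) ∈ E.opsOver T' :=
  Or.inr ((E.commit_tr _).symm ▸ ha.resolve_left ha0)

def Env.conflict (E : Env Obj Tr Opn) (T' : Set Tr) (b a : Opn) : Prop :=
  b ∈ E.opsOver T' ∧ a ∈ E.opsOver T' ∧ E.tr b ≠ E.tr a ∧ E.obj b = E.obj a ∧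
    (E.isWrite b ∧ E.isWrite a ∨ E.isWrite b ∧ E.isRead a ∨ E.isRead b ∧ E.isWrite a)

theorem Env.conflict.symm {b a : Opn} (h : E.conflict T' b a) : E.conflict T' a b := by
  obtain ⟨hb, ha, htr, hobj, hact⟩ := h
  exact ⟨ha, hb, htr.symm, hobj.symm, by tauto⟩

theorem Env.conflict.ne_op0 {b a : Opn} (h : E.conflict T' b a) : b ≠ E.op0 := by
  rcases h.2.2.2.2 with ⟨hb, -⟩ | ⟨hb, -⟩ | ⟨hb, -⟩
  exacts [hb.ne_op0, hb.ne_op0, hb.ne_op0]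

end

namespace Schedule

variable {E : Env Obj Tr Opn} {T' : Set Tr} (s : Schedule E T')

instance : IsStrictOrder Opn s.lt where
  irrefl := s.lt_irrefl
  trans := s.lt_trans

instance : IsStrictOrder Opn s.vlt where
  irrefl := s.vlt_irrefl
  trans := s.vlt_trans

variable {s}

theorem dep.conflict {b a : Opn} (h : s.dep b a) : E.conflict T' b a := by
  rcases h with ⟨hb, ha, htr, hobj, hwb, hwa, -⟩ | ⟨hb, ha, htr, hobj, hwb, hra, -⟩ |
    ⟨hb, ha, htr, hobj, hrb, hwa, -⟩
  exacts [⟨hb, ha, htr, hobj, .inl ⟨hwb, hwa⟩⟩, ⟨hb, ha, htr, hobj, .inr (.inl ⟨hwb, hra⟩)⟩,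
    ⟨hb, ha, htr, hobj, .inr (.inr ⟨hrb, hwa⟩)⟩]

theorem wrDep_or_rwDep {w r : Opn} (hw : w ∈ E.opsOver T') (hr : r ∈ E.opsOver T')
    (htr : E.tr w ≠ E.tr r) (hobj : E.obj w = E.obj r) (hww : E.isWrite w) (hrr : E.isRead r) :
    s.wrDep w r ∨ s.rwDep r w := by
  by_cases hv : w = s.vf r
  · exact .inl ⟨hw, hr, htr, hobj, hww, hrr, .inl hv⟩
  rcases s.vf_read r hr hrr with h0 | ⟨hvm, hvw, hvo⟩
  · refine .inr ⟨hr, hw, htr.symm, hobj.symm, hrr, hww, ?_⟩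
    rw [h0]
    exact s.vlt_op0_first w hw hww hww.ne_op0
  · rcases s.vlt_total w hw (s.vf r) hvm hww hvw (hobj.trans hvo.symm) hv with h | h
    · exact .inl ⟨hw, hr, htr, hobj, hww, hrr, .inr h⟩
    · exact .inr ⟨hr, hw, htr.symm, hobj.symm, hrr, hww, h⟩

theorem dep_or_dep_of_conflict {b a : Opn} (h : E.conflict T' b a) : s.dep b a ∨ s.dep a b := by
  obtain ⟨hb, ha, htr, hobj, ⟨hwb, hwa⟩ | ⟨hwb, hra⟩ | ⟨hrb, hwa⟩⟩ := h
  · exact (s.vlt_total b hb a ha hwb hwa hobj fun h => htr (h ▸ rfl)).imp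
      (fun h => .inl ⟨hb, ha, htr, hobj, hwb, hwa, h⟩)
      (fun h => .inl ⟨ha, hb, htr.symm, hobj.symm, hwa, hwb, h⟩)
  · exact (wrDep_or_rwDep hb ha htr hobj hwb hra).imp (.inr ∘ .inl) (.inr ∘ .inr)
  · exact (wrDep_or_rwDep ha hb htr.symm hobj.symm hwa hrb).symm.imp (.inr ∘ .inr) (.inr ∘ .inl)

theorem not_rwDep_of_wrDep {w r : Opn} (h : s.wrDep w r) : ¬ s.rwDep r w := by
  rintro ⟨-, -, -, -, -, -, hvw⟩
  rcases h.2.2.2.2.2.2 with rfl | hwv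
  · exact irrefl _ hvw
  · exact irrefl _ (_root_.trans hwv hvw)

theorem dep.not_dep {b a : Opn} (h : s.dep b a) : ¬ s.dep a b := by
  rintro (h' | h' | h') <;> rcases h with h | h | h
  · exact irrefl _ (_root_.trans h.2.2.2.2.2.2 h'.2.2.2.2.2.2)
  all_goals first
    | exact not_rwDep_of_wrDep h h'
    | exact not_rwDep_of_wrDep h' h
    | exact h.2.2.2.2.2.1.not_isWrite h'.2.2.2.2.1
    | exact h'.2.2.2.2.2.1.not_isWrite h.2.2.2.2.1
    | exact h.2.2.2.2.1.not_isWrite h'.2.2.2.2.2.1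
    | exact h'.2.2.2.2.1.not_isWrite h.2.2.2.2.2.1

theorem confEquiv_of_dep_imp {s' : Schedule E T'} (h : ∀ b a, s.dep b a → s'.dep b a) :
    s.confEquiv s' := by
  refine fun b a => ⟨h b a, fun h' => ?_⟩
  exact (dep_or_dep_of_conflict h'.conflict).resolve_right fun hab => h'.not_dep (h a b hab)

theorem dep.lt_of_singleVersion (hsv : s.singleVersion) {b a : Opn} (h : s.dep b a) :
    s.lt b a := by
  have hb0 := h.conflict.ne_op0
  rcases h with ⟨hb, ha, -, hobj, hwb, hwa, hv⟩ | ⟨hb, ha, -, hobj, hwb, hra, hv⟩ |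
    ⟨hb, ha, htr, hobj, hrb, hwa, hv⟩
  · exact (hsv.1 b hb a ha hwb hwa hobj).1 hv
  · refine hv.elim (fun hv => hv ▸ s.vf_lt a ha hra) fun hv => ?_
    rcases s.vf_read a ha hra with h0 | ⟨hm, hw, ho⟩
    · rw [h0] at hv
      exact absurd (_root_.trans hv (s.vlt_op0_first b hb hwb hb0)) (irrefl _)
    · exact _root_.trans ((hsv.1 b hb _ hm hwb hw (hobj.trans ho.symm)).1 hv) (s.vf_lt a ha hra)
  · refine (s.lt_total b hb a ha fun h => htr (h ▸ rfl)).resolve_right fun hab => ?_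
    have hva : s.lt (s.vf b) a := by
      rcases s.vf_read b hb hrb with h0 | ⟨hm, hw, ho⟩
      · exact h0 ▸ s.op0_first a ha hwa.ne_op0
      · exact (hsv.1 _ hm a ha hw hwa (ho.trans hobj)).1 hv
    exact hsv.2 b hb hrb ⟨a, ha, hwa, hobj.symm, hva, hab⟩

theorem singleVersion.dep_iff_lt (hsv : s.singleVersion) {b a : Opn} (h : E.conflict T' b a) :
    s.dep b a ↔ s.lt b a :=
  ⟨(·.lt_of_singleVersion hsv), fun hlt => (dep_or_dep_of_conflict h).resolve_right
    fun hab => asymm hlt (hab.lt_of_singleVersion hsv)⟩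

theorem serial.transBefore (hser : s.serial) {b a : Opn} (hb : b ∈ E.opsOver T')
    (ha : a ∈ E.opsOver T') (hb0 : b ≠ E.op0) (ha0 : a ≠ E.op0) (htr : E.tr b ≠ E.tr a)
    (hlt : s.lt b a) : s.transBefore (E.tr b) (E.tr a) := by
  intro p hp q hq hp0 hq0 hpt hqt
  have hpq : p ≠ q := by rintro rfl; exact htr (hpt.symm.trans hqt)
  refine (s.lt_total p hp q hq hpq).resolve_right fun hqp => ?_
  have hpa : p ≠ a := by rintro rfl; exact htr hpt.symm
  rcases s.lt_total p hp a ha hpa with hpa | hap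
  · exact htr (hpt.symm.trans (hqt ▸ hser q p a hq hp ha hq0 hp0 ha0 hqp hpa hqt))
  · exact htr (hser b a p hb ha hp hb0 ha0 hp0 hlt hap hpt.symm).symm

theorem sgAcyclic_of_sgEdge_imp {α : Type*} (r : α → α → Prop) [IsStrictOrder α r] (f : Tr → α)
    (h : ∀ t u, s.sgEdge t u → r (f t) (f u)) : s.sgAcyclic := fun t ht =>
  irrefl (f t) (Relation.transGen_eq_self (r := r) ▸ Relation.TransGen.lift f h t t ht)

theorem conflictSerializable.sgAcyclic (h : s.conflictSerializable) : s.sgAcyclic := by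
  obtain ⟨s', hsv, hser, hequiv⟩ := h
  refine sgAcyclic_of_sgEdge_imp s'.lt E.commitOf ?_
  rintro _ _ ⟨b, a, hdep, rfl, rfl⟩
  have hdep' := (hequiv b a).1 hdep
  obtain ⟨hb, ha, htr, -⟩ := hdep'.conflict
  have hb0 := hdep'.conflict.ne_op0
  have ha0 := hdep'.conflict.symm.ne_op0
  exact hser.transBefore hb ha hb0 ha0 htr (hdep'.lt_of_singleVersion hsv) _
    (Env.commitOf_tr_mem_opsOver hb hb0) _ (Env.commitOf_tr_mem_opsOver ha ha0)
    (E.commitOf_ne_op0 _) (E.commitOf_ne_op0 _) (E.commit_tr _) (E.commit_tr _)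

section Serialization

variable (s) (L : Tr → Tr → Prop)

def serialLt (x y : Opn) : Prop :=
  y ≠ E.op0 ∧ (x = E.op0 ∨ L (E.tr x) (E.tr y) ∨ (E.tr x = E.tr y ∧ s.lt x y))

instance [IsStrictOrder Tr L] : IsStrictOrder Opn (s.serialLt L) where
  irrefl := by
    rintro x ⟨hx0, rfl | h | ⟨-, h⟩⟩
    exacts [hx0 rfl, irrefl _ h, irrefl _ h]
  trans := by
    rintro x y z ⟨hy0, rfl | hxy | ⟨hxy, hxy'⟩⟩ ⟨hz0, rfl | hyz | ⟨hyz, hyz'⟩⟩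
    all_goals first
      | exact ⟨hz0, .inl rfl⟩
      | exact absurd rfl hy0
      | refine ⟨hz0, .inr ?_⟩
    · exact .inl (_root_.trans hxy hyz)
    · exact .inl (hyz ▸ hxy)
    · exact .inl (hxy ▸ hyz)
    · exact .inr ⟨hxy.trans hyz, _root_.trans hxy' hyz'⟩

theorem serialLt_total [Std.Trichotomous L] {x y : Opn} (hx : x ∈ E.opsOver T')
    (hy : y ∈ E.opsOver T') (hxy : x ≠ y) : s.serialLt L x y ∨ s.serialLt L y x := by
  by_cases hx0 : x = E.op0
  · exact .inl ⟨hx0 ▸ hxy.symm, .inl hx0⟩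
  by_cases hy0 : y = E.op0
  · exact .inr ⟨hx0, .inl hy0⟩
  by_cases htr : E.tr x = E.tr y
  · exact (s.lt_total x hx y hy hxy).imp (fun h => ⟨hy0, .inr (.inr ⟨htr, h⟩)⟩)
      (fun h => ⟨hx0, .inr (.inr ⟨htr.symm, h⟩)⟩)
  · rcases trichotomous_of L (E.tr x) (E.tr y) with h | h | h
    exacts [.inl ⟨hy0, .inr (.inl h)⟩, absurd h htr, .inr ⟨hx0, .inr (.inl h)⟩]

theorem serialLt_tr {x y : Opn} (hx0 : x ≠ E.op0) (h : s.serialLt L x y) :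
    L (E.tr x) (E.tr y) ∨ E.tr x = E.tr y := by
  obtain ⟨-, h0 | h | ⟨h, -⟩⟩ := h
  exacts [absurd h0 hx0, .inl h, .inr h]

def serialVersions (a : Opn) : Set Opn :=
  {c | c ∈ E.opsOver T' ∧ E.isWrite c ∧ E.obj c = E.obj a ∧ s.serialLt L c a}

theorem wellFounded_swap_serialLt [Finite Opn] [IsStrictOrder Tr L] :
    WellFounded (Function.swap (s.serialLt L)) :=
  Finite.wellFounded_of_trans_of_irrefl _

open Classical in
noncomputable def serialVf [Finite Opn] [IsStrictOrder Tr L] (a : Opn) : Opn :=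
  if h : (s.serialVersions L a).Nonempty then (s.wellFounded_swap_serialLt L).min _ h else E.op0

variable [Finite Opn] [IsStrictTotalOrder Tr L] {s L}

theorem serialVf_mem {a : Opn} (h : (s.serialVersions L a).Nonempty) :
    s.serialVf L a ∈ s.serialVersions L a := by
  rw [serialVf, dif_pos h]
  exact WellFounded.min_mem _ _ _

theorem not_serialLt_serialVf {a c : Opn} (hc : c ∈ s.serialVersions L a) :
    ¬ s.serialLt L (s.serialVf L a) c := by
  rw [serialVf, dif_pos ⟨c, hc⟩]
  exact (s.wellFounded_swap_serialLt L).not_lt_min _ hc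

theorem serialVf_eq_op0 {a : Opn} (h : ¬ (s.serialVersions L a).Nonempty) :
    s.serialVf L a = E.op0 := by
  rw [serialVf, dif_neg h]

theorem serialLt_serialVf {a : Opn} (ha0 : a ≠ E.op0) : s.serialLt L (s.serialVf L a) a := by
  by_cases h : (s.serialVersions L a).Nonempty
  · exact (serialVf_mem h).2.2.2
  · exact serialVf_eq_op0 h ▸ ⟨ha0, .inl rfl⟩

variable (s L)

noncomputable def serialize : Schedule E T' where
  lt := s.serialLt L
  vlt := s.serialLt L
  vf := s.serialVf L
  lt_trans _ _ _ := _root_.trans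
  lt_irrefl := irrefl
  lt_total _ hx _ hy := s.serialLt_total L hx hy
  op0_first _ _ ha0 := ⟨ha0, .inl rfl⟩
  first_first a ha ha0 haf := ⟨ha0, .inr (.inr ⟨E.first_tr _, s.first_first a ha ha0 haf⟩)⟩
  commit_last a ha ha0 hac :=
    ⟨E.commitOf_ne_op0 _, .inr (.inr ⟨(E.commit_tr _).symm, s.commit_last a ha ha0 hac⟩)⟩
  vlt_trans _ _ _ := _root_.trans
  vlt_irrefl := irrefl
  vlt_total _ hx _ hy _ _ _ := s.serialLt_total L hx hy
  vlt_op0_first _ _ _ ha0 := ⟨ha0, .inl rfl⟩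
  vf_read a _ _ := by
    by_cases h : (s.serialVersions L a).Nonempty
    · obtain ⟨hm, hw, ho, -⟩ := serialVf_mem h
      exact .inr ⟨hm, hw, ho⟩
    · exact .inl (serialVf_eq_op0 h)
  vf_lt _ _ hr := serialLt_serialVf hr.ne_op0

theorem serialize_singleVersion : (s.serialize L).singleVersion := by
  refine ⟨fun _ _ _ _ _ _ _ => Iff.rfl, ?_⟩
  rintro a - - ⟨c, hc, hwc, hoc, hvc, hca⟩
  exact not_serialLt_serialVf ⟨hc, hwc, hoc, hca⟩ hvc

theorem serialize_serial : (s.serialize L).serial := by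
  intro a b c _ _ _ ha0 hb0 _ hab hbc hac
  rcases serialLt_tr s L ha0 hab with hab | hab
  · rcases serialLt_tr s L hb0 hbc with hbc | hbc
    · exact absurd (_root_.trans hab (hac ▸ hbc)) (irrefl _)
    · exact absurd (hbc ▸ hac ▸ hab) (irrefl _)
  · exact hab.symm

theorem confEquiv_serialize (hL : ∀ t u, s.sgEdge t u → L t u) :
    s.confEquiv (s.serialize L) := by
  refine confEquiv_of_dep_imp fun b a h => ?_
  refine ((serialize_singleVersion s L).dep_iff_lt h.conflict).2 ⟨h.conflict.symm.ne_op0, ?_⟩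
  exact .inr (.inl (hL _ _ ⟨b, a, h, rfl, rfl⟩))

end Serialization

theorem sgAcyclic.conflictSerializable [Finite Opn] (h : s.sgAcyclic) :
    s.conflictSerializable := by
  obtain ⟨L, _, hL⟩ := Relation.exists_isStrictTotalOrder_le_of_acyclic h
  exact ⟨s.serialize L, serialize_singleVersion s L, serialize_serial s L, confEquiv_serialize s L hL⟩

end Schedule

theorem stmt2_general {Obj Tr Opn : Type} [Finite Opn]
    {E : Env Obj Tr Opn} {T' : Set Tr} (s : Schedule E T') :
    s.conflictSerializable ↔ s.sgAcyclic :=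
  ⟨Schedule.conflictSerializable.sgAcyclic, Schedule.sgAcyclic.conflictSerializable⟩

/-- A multiversion schedule is conflict-serializable iff its
serialization graph is acyclic. -/
theorem stmt2 {Obj Tr Opn : Type} [Finite Tr] [Finite Opn]
    {E : Env Obj Tr Opn} {T' : Set Tr} (s : Schedule E T') :
    s.conflictSerializable ↔ s.sgAcyclic :=
  stmt2_general s

end MVCC
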